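/- arXiv:1204.0401 — 2 statements merged into one kernel-verified Lean document; each statement's English description precedes it below -/
import Mathlib

section
/- Let (Z_n(A)) be a BPRE with EZ_1(A)² < ∞, per-generation mean M := E g'_{Λ₁}(1) = γ/ν, and second-moment parameter γ̂/ν := E[g'_{Λ₁}(1)²], and suppose γ > 1 and γ̂ ≤ γ. Then the martingale (γ^{-n} Z_n(A)) satisfies the variance recursion-based bound sup_n Var(γ^{-n} Z_n(A)) ≤ 1 + γ^{-2} Σ_{k≥0} γ^{-k}(Var Z_1(A) + c₁c₂ k) < ∞ for suitable finite constants c₁, c₂; in particular (γ^{-n} Z_n(A)) is L²-bounded, uniformly integrable, and its a.s. limit W satisfies E W = 1 and P(W > 0) > 0. -/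
open Filter MeasureTheory ProbabilityTheory
open scoped NNReal

/-!
Multiplying the variance recursion by `γ^{-2(n+1)}` makes it telescope: `Var(γ^{-n} Z_n)` is
bounded by a partial sum of the convergent series `γ^{-2} ∑ γ^{-k} (Var Z_1 + c₁ c₂ k)`, the
error term `c₁ ν^n f''_n(1)` contributing at most `c₁ c₂ n γ^n`. Since the means are all one,
the second moments are bounded, so the martingale is uniformly integrable; it then converges
a.s. and in `L¹` to a limit `W` with `E W = 1`, which forces `P(W > 0) > 0`.
-/

theorem summable_pow_mul_add_mul {r : ℝ} (hr₀ : 0 ≤ r) (hr₁ : r < 1) (a b : ℝ) :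
    Summable fun k : ℕ => r ^ k * (a + b * k) := by
  have hgeom : Summable fun k : ℕ => a * r ^ k :=
    (summable_geometric_of_lt_one hr₀ hr₁).mul_left a
  have hlin : Summable fun k : ℕ => b * ((k : ℝ) ^ 1 * r ^ k) :=
    (summable_pow_mul_geometric_of_norm_lt_one 1 (by rwa [Real.norm_of_nonneg hr₀])).mul_left b
  exact (hgeom.add hlin).congr fun k => by ring

theorem inv_pow_sq_mul_le_of_recursion {γ a b : ℝ} (hγ : 0 < γ) {V e : ℕ → ℝ} (hV₀ : V 0 = 0)
    (hrec : ∀ n, V (n + 1) = γ ^ 2 * V n + γ ^ n * a + e n)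
    (he : ∀ n, e n ≤ b * n * γ ^ n) (n : ℕ) :
    (γ⁻¹ ^ n) ^ 2 * V n ≤ γ⁻¹ ^ 2 * ∑ k ∈ Finset.range n, γ⁻¹ ^ k * (a + b * k) := by
  induction n with
  | zero => simp [hV₀]
  | succ n ih =>
    have hstep : (γ⁻¹ ^ (n + 1)) ^ 2 * V (n + 1) = (γ⁻¹ ^ n) ^ 2 * V n
        + γ⁻¹ ^ 2 * (γ⁻¹ ^ n * a) + (γ⁻¹ ^ (n + 1)) ^ 2 * e n := by
      rw [hrec]
      simp only [inv_pow]
      field_simp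
      ring
    have herr : (γ⁻¹ ^ (n + 1)) ^ 2 * e n ≤ γ⁻¹ ^ 2 * (γ⁻¹ ^ n * (b * n)) :=
      calc (γ⁻¹ ^ (n + 1)) ^ 2 * e n ≤ (γ⁻¹ ^ (n + 1)) ^ 2 * (b * n * γ ^ n) := by
            gcongr; exact he n
        _ = γ⁻¹ ^ 2 * (γ⁻¹ ^ n * (b * n)) := by
            simp only [inv_pow]
            field_simp
            ring
    rw [hstep, Finset.sum_range_succ]
    linear_combination ih + herr

theorem uniformIntegrable_of_integral_sq_le {α ι : Type*} {m : MeasurableSpace α} {μ : Measure α}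
    [IsFiniteMeasure μ] {f : ι → α → ℝ} (hf : ∀ i, MemLp (f i) 2 μ) {B : ℝ}
    (hB : ∀ i, ∫ x, f i x ^ 2 ∂μ ≤ B) : UniformIntegrable f 1 μ := by
  refine uniformIntegrable_of le_rfl ENNReal.one_ne_top (fun i => (hf i).1) fun ε hε => ?_
  set C : ℝ≥0 := (B / ε).toNNReal + 1
  have hC : (0 : ℝ) < C := by positivity
  have hBC : B / C ≤ ε := by
    rw [div_le_iff₀ hC, ← div_le_iff₀' hε]
    exact (Real.le_coe_toNNReal _).trans (by simp [C])
  refine ⟨C, fun i => ?_⟩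
  have hpoint : ∀ x, ‖{x | C ≤ ‖f i x‖₊}.indicator (f i) x‖ₑ ≤ ENNReal.ofReal (f i x ^ 2 / C) := by
    intro x
    by_cases hx : x ∈ {x | C ≤ ‖f i x‖₊}
    · rw [Set.indicator_of_mem hx, Real.enorm_eq_ofReal_abs]
      refine ENNReal.ofReal_le_ofReal ?_
      rw [le_div_iff₀ hC, ← sq_abs, sq]
      exact mul_le_mul_of_nonneg_left (by exact_mod_cast hx) (abs_nonneg _)
    · simp [Set.indicator_of_notMem hx]
  calc eLpNorm ({x | C ≤ ‖f i x‖₊}.indicator (f i)) 1 μ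
      = ∫⁻ x, ‖{x | C ≤ ‖f i x‖₊}.indicator (f i) x‖ₑ ∂μ := eLpNorm_one_eq_lintegral_enorm
    _ ≤ ∫⁻ x, ENNReal.ofReal (f i x ^ 2 / C) ∂μ := lintegral_mono hpoint
    _ = ENNReal.ofReal (∫ x, f i x ^ 2 / C ∂μ) :=
      (ofReal_integral_eq_lintegral_ofReal ((hf i).integrable_sq.div_const _)
        (ae_of_all _ fun x => by positivity)).symm
    _ ≤ ENNReal.ofReal ε := by
      rw [integral_div]
      exact ENNReal.ofReal_le_ofReal ((div_le_div_of_nonneg_right (hB i) hC.le).trans hBC)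

theorem measure_setOf_pos_pos_of_integral_pos {α : Type*} {m : MeasurableSpace α}
    {μ : Measure α} {f : α → ℝ} (hf : 0 < ∫ x, f x ∂μ) : 0 < μ {x | 0 < f x} := by
  refine pos_iff_ne_zero.2 fun h => hf.not_ge (integral_nonpos_of_ae ?_)
  filter_upwards [measure_eq_zero_iff_ae_notMem.1 h] with x hx using not_lt.1 hx

section Martingale

variable {Ω : Type*} {m : MeasurableSpace Ω} {μ : Measure Ω}

theorem MeasureTheory.Martingale.integral_eq {ι E : Type*} [Preorder ι] [NormedAddCommGroup E]
    [NormedSpace ℝ E] [CompleteSpace E] {ℱ : Filtration ι m} [SigmaFiniteFiltration μ ℱ]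
    {f : ι → Ω → E} (hf : Martingale f ℱ μ) {i j : ι} (hij : i ≤ j) :
    ∫ ω, f i ω ∂μ = ∫ ω, f j ω ∂μ := by
  simpa only [setIntegral_univ] using hf.setIntegral_eq hij MeasurableSet.univ

theorem MeasureTheory.Martingale.integral_limitProcess [IsFiniteMeasure μ] {ℱ : Filtration ℕ m}
    {f : ℕ → Ω → ℝ} (hf : Martingale f ℱ μ) (hunif : UniformIntegrable f 1 μ) (n : ℕ) :
    ∫ ω, ℱ.limitProcess f μ ω ∂μ = ∫ ω, f n ω ∂μ := by
  rw [integral_congr_ae (hf.ae_eq_condExp_limitProcess hunif n), integral_condExp (ℱ.le n)]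

end Martingale

theorem stmt9_general {Ω : Type*} {m : MeasurableSpace Ω} (P : Measure Ω) [IsProbabilityMeasure P]
    (𝒢 : Filtration ℕ m) (Z : ℕ → Ω → ℕ) (γ ν c₁ c₂ : ℝ) (f'' : ℕ → ℝ)
    (hγ : 1 < γ) (hν : 0 < ν)
    (hc₁ : 0 ≤ c₁) (hc₂ : 0 ≤ c₂)
    (hZ0 : ∀ ω, Z 0 ω = 1)
    (hL2 : ∀ n, MemLp (fun ω => (Z n ω : ℝ)) 2 P)
    (hmart : Martingale (fun n ω => γ⁻¹ ^ n * (Z n ω : ℝ)) 𝒢 P)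
    (hf : ∀ n, f'' n ≤ c₂ * n * (γ / ν) ^ n)
    (hvarrec : ∀ n, variance (fun ω => (Z (n + 1) ω : ℝ)) P =
      γ ^ 2 * variance (fun ω => (Z n ω : ℝ)) P +
        γ ^ n * variance (fun ω => (Z 1 ω : ℝ)) P + c₁ * ν ^ n * f'' n) :
    (Summable fun k : ℕ =>
        γ⁻¹ ^ k * (variance (fun ω => (Z 1 ω : ℝ)) P + c₁ * c₂ * k)) ∧
    (∀ n, variance (fun ω => γ⁻¹ ^ n * (Z n ω : ℝ)) P ≤
        1 + γ⁻¹ ^ 2 * ∑' k : ℕ,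
          γ⁻¹ ^ k * (variance (fun ω => (Z 1 ω : ℝ)) P + c₁ * c₂ * k)) ∧
    UniformIntegrable (fun n ω => γ⁻¹ ^ n * (Z n ω : ℝ)) 1 P ∧
    ∃ W : Ω → ℝ,
      (∀ᵐ ω ∂P, Tendsto (fun n => γ⁻¹ ^ n * (Z n ω : ℝ)) atTop (nhds (W ω))) ∧
      ∫ ω, W ω ∂P = 1 ∧ 0 < P {ω | 0 < W ω} := by
  set X : ℕ → Ω → ℝ := fun n ω => γ⁻¹ ^ n * (Z n ω : ℝ)
  set S := ∑' k : ℕ, γ⁻¹ ^ k * (variance (fun ω => (Z 1 ω : ℝ)) P + c₁ * c₂ * k)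
  have hγ₀ : 0 < γ := one_pos.trans hγ
  have hsum := summable_pow_mul_add_mul (by positivity) (inv_lt_one_of_one_lt₀ hγ)
    (variance (fun ω => (Z 1 ω : ℝ)) P) (c₁ * c₂)
  have hV₀ : variance (fun ω => (Z 0 ω : ℝ)) P = 0 := by
    simp [hZ0, variance_eq_sub (memLp_const (1 : ℝ))]
  have herr (n : ℕ) : c₁ * ν ^ n * f'' n ≤ c₁ * c₂ * n * γ ^ n :=
    calc c₁ * ν ^ n * f'' n ≤ c₁ * ν ^ n * (c₂ * n * (γ / ν) ^ n) := by gcongr; exact hf n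
      _ = c₁ * c₂ * n * γ ^ n := by rw [div_pow]; field_simp
  have hvar (n : ℕ) : variance (X n) P ≤ γ⁻¹ ^ 2 * S := by
    rw [variance_const_mul]
    refine (inv_pow_sq_mul_le_of_recursion (V := fun n => variance (fun ω => (Z n ω : ℝ)) P)
      hγ₀ hV₀ hvarrec herr n).trans ?_
    have hterm (k : ℕ) : 0 ≤ γ⁻¹ ^ k * (variance (fun ω => (Z 1 ω : ℝ)) P + c₁ * c₂ * k) := by
      have := variance_nonneg (fun ω => (Z 1 ω : ℝ)) P
      positivity
    gcongr
    exact hsum.sum_le_tsum _ fun k _ => hterm k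
  have hmean (n : ℕ) : ∫ ω, X n ω ∂P = 1 := by
    rw [← hmart.integral_eq (Nat.zero_le n)]
    simp [X, hZ0]
  have hX₂ (n : ℕ) : MemLp (X n) 2 P := (hL2 n).const_mul _
  have hUI : UniformIntegrable X 1 P := by
    refine uniformIntegrable_of_integral_sq_le hX₂ (B := 1 + γ⁻¹ ^ 2 * S) fun n => ?_
    have := variance_eq_sub (hX₂ n)
    simp only [Pi.pow_apply, hmean] at this
    linarith [hvar n]
  have hEW : ∫ ω, 𝒢.limitProcess X P ω ∂P = 1 :=
    (hmart.integral_limitProcess hUI 0).trans (hmean 0)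
  exact ⟨hsum, fun n => (hvar n).trans (le_add_of_nonneg_left zero_le_one), hUI,
    𝒢.limitProcess X P, hmart.submartingale.ae_tendsto_limitProcess_of_uniformIntegrable hUI,
    hEW, measure_setOf_pos_pos_of_integral_pos (hEW ▸ one_pos)⟩

/-- for the total `A`-parasite count `(Z_n(A))` with `E Z_1(A)² < ∞`, `γ > 1` and
`γ̂ ≤ γ`, for which `(γ^{-n} Z_n(A))` is a nonnegative mean-one martingale whose variance obeys
`Var Z_{n+1}(A) = γ² Var Z_n(A) + γ^n Var Z_1(A) + c₁ ν^n f''_n(1)` with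
`f''_n(1) ≤ c₂ n (γ/ν)^n`, the normalized martingale has uniformly bounded variance, explicitly
`Var(γ^{-n} Z_n(A)) ≤ 1 + γ^{-2} ∑_{k≥0} γ^{-k}(Var Z_1(A) + c₁ c₂ k)`; in particular it is
L²-bounded, uniformly integrable, and its a.s. limit `W` satisfies `E W = 1` and
`P(W > 0) > 0`. -/
theorem stmt9 {Ω : Type*} {m : MeasurableSpace Ω} (P : Measure Ω) [IsProbabilityMeasure P]
    (𝒢 : Filtration ℕ m) (Z : ℕ → Ω → ℕ) (γ ν γhat c₁ c₂ : ℝ) (f'' : ℕ → ℝ)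
    (hγ : 1 < γ) (hν : 0 < ν) (hγhat : γhat ≤ γ)
    (hc₁ : 0 ≤ c₁) (hc₂ : 0 ≤ c₂)
    (hZ0 : ∀ ω, Z 0 ω = 1)
    (hL2 : ∀ n, MemLp (fun ω => (Z n ω : ℝ)) 2 P)
    (hmart : Martingale (fun n ω => γ⁻¹ ^ n * (Z n ω : ℝ)) 𝒢 P)
    (hf : ∀ n, f'' n ≤ c₂ * n * (γ / ν) ^ n) (hfpos : ∀ n, 0 ≤ f'' n)
    (hvarrec : ∀ n, variance (fun ω => (Z (n + 1) ω : ℝ)) P =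
      γ ^ 2 * variance (fun ω => (Z n ω : ℝ)) P +
        γ ^ n * variance (fun ω => (Z 1 ω : ℝ)) P + c₁ * ν ^ n * f'' n) :
    (Summable fun k : ℕ =>
        γ⁻¹ ^ k * (variance (fun ω => (Z 1 ω : ℝ)) P + c₁ * c₂ * k)) ∧
    (∀ n, variance (fun ω => γ⁻¹ ^ n * (Z n ω : ℝ)) P ≤
        1 + γ⁻¹ ^ 2 * ∑' k : ℕ,
          γ⁻¹ ^ k * (variance (fun ω => (Z 1 ω : ℝ)) P + c₁ * c₂ * k)) ∧
    UniformIntegrable (fun n ω => γ⁻¹ ^ n * (Z n ω : ℝ)) 1 P ∧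
    ∃ W : Ω → ℝ,
      (∀ᵐ ω ∂P, Tendsto (fun n => γ⁻¹ ^ n * (Z n ω : ℝ)) atTop (nhds (W ω))) ∧
      ∫ ω, W ω ∂P = 1 ∧ 0 < P {ω | 0 < W ω} :=
  stmt9_general P 𝒢 Z γ ν c₁ c₂ f'' hγ hν hc₁ hc₂ hZ0 hL2 hmart hf hvarrec
end

section
/- Suppose a BPRE (Z_n) (the conditioned A-parasite process along a random cell line) satisfies the Geiger–Kersting–Vatutin asymptotics P(Z_n > 0) ~ c n^{-3/2} ρ^n with ρ := inf_{0≤θ≤1} E g'_{Λ₁}(1)^θ and c ∈ (0,∞). If νρ = 1, then E[#G*_n(A)] = ν^n P(Z_n > 0) → 0 as n → ∞, and hence (via Fatou and the extinction–explosion dichotomy) P(Ext(A)) = 1. -/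
open Filter MeasureTheory Asymptotics Topology

/-!
Since `P(Z_n > 0) ~ c n^{-3/2} ρ^n`, multiplying by `ν^n` gives
`E[#G*_n(A)] ~ c n^{-3/2} (νρ)^n`, which tends to `0` because `|νρ| ≤ 1`: the polynomial factor
`n^{-3/2}` decides the limit. By Fatou's lemma the integer-valued counts then vanish infinitely
often almost surely, which rules out explosion in the extinction–explosion dichotomy.
-/

theorem tendsto_natCast_rpow_nhds_zero_of_neg {s : ℝ} (hs : s < 0) :
    Tendsto (fun n : ℕ => (n : ℝ) ^ s) atTop (𝓝 0) := by
  simpa only [neg_neg, Function.comp_def] using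
    (tendsto_rpow_neg_atTop (neg_pos.2 hs)).comp tendsto_natCast_atTop_atTop

theorem tendsto_pow_mul_of_isEquivalent_natCast_rpow_mul_pow {a : ℕ → ℝ} {c s ν ρ : ℝ}
    (hs : s < 0) (hνρ : |ν * ρ| ≤ 1) (ha : a ~[atTop] fun n => c * (n : ℝ) ^ s * ρ ^ n) :
    Tendsto (fun n => ν ^ n * a n) atTop (𝓝 0) := by
  have hequiv : (fun n => ν ^ n * a n) ~[atTop] fun n => c * (n : ℝ) ^ s * (ν * ρ) ^ n := by
    refine (IsEquivalent.refl.mul ha).congr_right (Eventually.of_forall fun n => ?_)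
    simp only [Pi.mul_apply, mul_pow]
    ring
  refine hequiv.symm.tendsto_nhds (squeeze_zero_norm (fun n => ?_)
    (by simpa using (tendsto_natCast_rpow_nhds_zero_of_neg hs).const_mul |c|))
  rw [norm_mul, norm_mul, norm_pow, Real.norm_eq_abs, Real.norm_eq_abs, Real.norm_eq_abs,
    abs_of_nonneg (by positivity : (0 : ℝ) ≤ (n : ℝ) ^ s)]
  exact mul_le_of_le_one_right (by positivity) (pow_le_one₀ (abs_nonneg _) hνρ)

section

variable {α δ : Type*} [TopologicalSpace α] [MeasurableSpace α] [BorelSpace α]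
  [ConditionallyCompleteLinearOrder α] [OrderTopology α] [SecondCountableTopology α]
  [MeasurableSpace δ] {μ : Measure δ}

theorem AEMeasurable.liminf {f : ℕ → δ → α} (hf : ∀ n, AEMeasurable (f n) μ) :
    AEMeasurable (fun x => Filter.liminf (fun n => f n x) atTop) μ := by
  refine ⟨fun x => Filter.liminf (fun n => (hf n).mk (f n) x) atTop,
    Measurable.liminf fun n => (hf n).measurable_mk, ?_⟩
  filter_upwards [ae_all_iff.2 fun n => (hf n).ae_eq_mk] with x hx using by simp [hx]

end

section

variable {α : Type*} [MeasurableSpace α] {μ : Measure α}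

theorem ae_liminf_eq_zero_of_tendsto_lintegral_zero {f : ℕ → α → ENNReal}
    (hf : ∀ n, AEMeasurable (f n) μ) (h : Tendsto (fun n => ∫⁻ a, f n a ∂μ) atTop (𝓝 0)) :
    ∀ᵐ a ∂μ, liminf (fun n => f n a) atTop = 0 := by
  refine (lintegral_eq_zero_iff' (AEMeasurable.liminf hf)).1 (le_antisymm ?_ zero_le)
  exact h.liminf_eq ▸ lintegral_liminf_le' hf

theorem ae_frequently_eq_zero_of_tendsto_integral_zero {f : ℕ → α → ℕ}
    (hint : ∀ n, Integrable (fun a => (f n a : ℝ)) μ)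
    (h : Tendsto (fun n => ∫ a, (f n a : ℝ) ∂μ) atTop (𝓝 0)) :
    ∀ᵐ a ∂μ, ∃ᶠ n in atTop, f n a = 0 := by
  have hlintegral (n : ℕ) :
      ∫⁻ a, (f n a : ENNReal) ∂μ = ENNReal.ofReal (∫ a, (f n a : ℝ) ∂μ) := by
    rw [ofReal_integral_eq_lintegral_ofReal (hint n) (Eventually.of_forall fun a => by positivity)]
    simp only [ENNReal.ofReal_natCast]
  have hmeas (n : ℕ) : AEMeasurable (fun a => (f n a : ENNReal)) μ := by
    simpa only [ENNReal.ofReal_natCast] using (hint n).aemeasurable.ennreal_ofReal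
  have hlim : Tendsto (fun n => ∫⁻ a, (f n a : ENNReal) ∂μ) atTop (𝓝 0) := by
    simpa only [hlintegral, ENNReal.ofReal_zero] using ENNReal.tendsto_ofReal h
  filter_upwards [ae_liminf_eq_zero_of_tendsto_lintegral_zero hmeas hlim] with a ha
  exact (frequently_lt_of_liminf_lt (by isBoundedDefault) (ha ▸ zero_lt_one)).mono
    fun n hn => Nat.lt_one_iff.1 (by exact_mod_cast hn)

end

theorem stmt15_general {Ω Ω' : Type*} [MeasurableSpace Ω] [MeasurableSpace Ω']
    (P : Measure Ω) (P' : Measure Ω')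
    (GstarA : ℕ → Ω → ℕ) (Z : ℕ → Ω' → ℕ) (ν ρ c : ℝ)
    (hνρ : ν * ρ = 1)
    (hint : ∀ n, Integrable (fun ω => (GstarA n ω : ℝ)) P)
    (hE : ∀ n, ∫ ω, (GstarA n ω : ℝ) ∂P = ν ^ n * (P' {ω' | 0 < Z n ω'}).toReal)
    (hasymp : Tendsto
      (fun n : ℕ => (P' {ω' | 0 < Z n ω'}).toReal / (c * (n : ℝ) ^ (-(3 : ℝ) / 2) * ρ ^ n))
      atTop (nhds 1))
    (hdich : ∀ᵐ ω ∂P, (∃ N, ∀ n ≥ N, GstarA n ω = 0) ∨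
      Tendsto (fun n => GstarA n ω) atTop atTop) :
    Tendsto (fun n => ∫ ω, (GstarA n ω : ℝ) ∂P) atTop (nhds 0) ∧
      ∀ᵐ ω ∂P, ∃ N, ∀ n ≥ N, GstarA n ω = 0 := by
  have hmean : Tendsto (fun n => ∫ ω, (GstarA n ω : ℝ) ∂P) atTop (𝓝 0) := by
    simp only [hE]
    exact tendsto_pow_mul_of_isEquivalent_natCast_rpow_mul_pow (by norm_num) (by simp [hνρ])
      (isEquivalent_of_tendsto_one hasymp)
  refine ⟨hmean, ?_⟩
  filter_upwards [hdich, ae_frequently_eq_zero_of_tendsto_integral_zero hint hmean]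
    with ω hdichω hfreq
  exact hdichω.resolve_right fun hexplode => hfreq (hexplode.eventually_ne_atTop 0)

/-- weakly subcritical case.  Suppose the BPRE `(Z_n)` (on `Ω'`) satisfies the
Geiger–Kersting–Vatutin asymptotics `P'(Z_n > 0) ~ c n^{-3/2} ρ^n` with
`ρ = inf_{0≤θ≤1} E g'_{Λ₁}(1)^θ`, `c > 0`, and `ν ρ = 1`.  Then, via the identity
`E[#G*_n(A)] = ν^n P'(Z_n > 0)`, the expected number of contaminated `A`-cells tends to `0`,
and hence (Fatou plus the extinction–explosion dichotomy) `P(Ext(A)) = 1`. -/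
theorem stmt15 {Ω Ω' : Type*} [MeasurableSpace Ω] [MeasurableSpace Ω']
    (P : Measure Ω) [IsProbabilityMeasure P] (P' : Measure Ω') [IsProbabilityMeasure P']
    (GstarA : ℕ → Ω → ℕ) (Z : ℕ → Ω' → ℕ) (ν ρ c : ℝ)
    (hν : 1 ≤ ν) (hρ : 0 < ρ) (hc : 0 < c) (hνρ : ν * ρ = 1)
    (hint : ∀ n, Integrable (fun ω => (GstarA n ω : ℝ)) P)
    (hE : ∀ n, ∫ ω, (GstarA n ω : ℝ) ∂P = ν ^ n * (P' {ω' | 0 < Z n ω'}).toReal)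
    (hasymp : Tendsto
      (fun n : ℕ => (P' {ω' | 0 < Z n ω'}).toReal / (c * (n : ℝ) ^ (-(3 : ℝ) / 2) * ρ ^ n))
      atTop (nhds 1))
    (hdich : ∀ᵐ ω ∂P, (∃ N, ∀ n ≥ N, GstarA n ω = 0) ∨
      Tendsto (fun n => GstarA n ω) atTop atTop) :
    Tendsto (fun n => ∫ ω, (GstarA n ω : ℝ) ∂P) atTop (nhds 0) ∧
      ∀ᵐ ω ∂P, ∃ N, ∀ n ≥ N, GstarA n ω = 0 :=
  stmt15_general P P' GstarA Z ν ρ c hνρ hint hE hasymp hdich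
end
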